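/- arXiv:cs/0412009 — 2 statements merged into one kernel-verified Lean document; each statement's English description precedes it below -/
import Mathlib

section
/- Every finite chordal graph with at least one vertex has a simplicial vertex, i.e., a vertex v such that the neighborhood Adj(v) induces a complete subgraph. -/
/-- A simple graph is chordal if every cycle of length at least 4 has a chord,
i.e., an edge of the graph joining two vertices of the cycle that is not an
edge of the cycle itself. -/
def IsChordal {V : Type*} (G : SimpleGraph V) : Prop :=
  ∀ ⦃v : V⦄ (c : G.Walk v v), c.IsCycle → 4 ≤ c.length →
    ∃ u w : V, u ∈ c.support ∧ w ∈ c.support ∧ G.Adj u w ∧ s(u, w) ∉ c.edges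

/-!
We prove more, by induction on a finite vertex set `s`: for every clique `K ⊊ s`, some vertex of
`s \ K` is simplicial in `G[s]`. If some `u ∈ s` is adjacent to all of `K \ {u}` but not to all of
`s`, let `C` be a component of `G[s] - N[u]`. The neighbours of `C` in `N(u)` form a clique: two
non-adjacent ones would close, through `u` and a chordless path across `C`, a chordless cycle of
length at least 4. Induction on `C ∪ N(C)` with this clique gives a vertex of `C` that is
simplicial there, hence in `G[s]`, and it lies outside `K ⊆ N[u]`. Otherwise every vertex of `K`
is adjacent to all of `s` (and `s` is a clique if `K = ∅`), so one of them can be deleted.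
-/

namespace SimpleGraph.Walk

variable {V : Type*} {G : SimpleGraph V} {u v : V}

theorem exists_length_lt_of_adj_getVert (p : G.Walk u v) {i j : ℕ} (hij : i + 1 < j)
    (hj : j ≤ p.length) (h : G.Adj (p.getVert i) (p.getVert j)) :
    ∃ q : G.Walk u v, q.support ⊆ p.support ∧ q.length < p.length := by
  refine ⟨(p.take i).append (cons h (p.drop j)), fun z hz => ?_, ?_⟩
  · rw [support_append, support_cons, List.tail_cons, support_take,
      drop_support_eq_support_drop_min, List.mem_append] at hz
    exact hz.elim (fun hz => List.take_subset _ _ hz) (fun hz => List.drop_subset _ _ hz)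
  · simp only [length_append, length_cons, take_length, drop_length]
    omega

theorem exists_length_lt_of_isChord (p : G.Walk u v) {a b : V} (h : p.IsChord s(a, b)) :
    ∃ q : G.Walk u v, q.support ⊆ p.support ∧ q.length < p.length := by
  obtain ⟨hab, hnot, ha, hb⟩ := isChord_sym2Mk.mp h
  obtain ⟨i, rfl, hi⟩ := mem_support_iff_exists_getVert.mp ha
  obtain ⟨j, rfl, hj⟩ := mem_support_iff_exists_getVert.mp hb
  have hij : i ≠ j := by rintro rfl; exact hab.ne rfl
  by_cases hlt : i + 1 < j
  · exact p.exists_length_lt_of_adj_getVert hlt hj hab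
  by_cases hgt : j + 1 < i
  · exact p.exists_length_lt_of_adj_getVert hgt hi hab.symm
  exfalso
  obtain rfl | rfl : j = i + 1 ∨ i = j + 1 := by omega
  · exact hnot ((mk_mem_edges_iff_exists p).mpr ⟨i, by omega, rfl⟩)
  · exact hnot ((mk_mem_edges_iff_exists p).mpr ⟨j, by omega, Sym2.eq_swap⟩)

theorem exists_isPath_isChordless (p : G.Walk u v) :
    ∃ q : G.Walk u v, q.IsPath ∧ q.IsChordless ∧ q.support ⊆ p.support := by
  classical
  have hex : ∃ n, ∃ q : G.Walk u v, q.IsPath ∧ q.support ⊆ p.support ∧ q.length = n :=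
    ⟨_, p.bypass, p.bypass_isPath, p.support_bypass_subset_support, rfl⟩
  obtain ⟨q, hq, hqp, hlen⟩ := Nat.find_spec hex
  refine ⟨q, hq, fun e he => ?_, hqp⟩
  induction e with
  | h a b =>
    obtain ⟨r, hrq, hr⟩ := q.exists_length_lt_of_isChord he
    exact Nat.find_min hex (hlen ▸ (r.length_bypass_le_length.trans_lt hr))
      ⟨r.bypass, r.bypass_isPath,
        fun z hz => hqp (hrq (r.support_bypass_subset_support hz)), rfl⟩

end SimpleGraph.Walk

namespace SimpleGraph

variable {V : Type*} (G : SimpleGraph V)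

def reachWithin (T : Set V) (w : V) : Set V :=
  {z | ∃ p : G.Walk w z, ∀ y ∈ p.support, y ∈ T}

variable {G} {T : Set V} {w : V}

theorem mem_reachWithin_self (hw : w ∈ T) : w ∈ G.reachWithin T w :=
  ⟨.nil, by simpa using hw⟩

theorem reachWithin_subset : G.reachWithin T w ⊆ T :=
  fun _ ⟨p, hp⟩ => hp _ p.end_mem_support

theorem mem_reachWithin_of_adj {z z' : V} (hz : z ∈ G.reachWithin T w) (hz' : z' ∈ T)
    (h : G.Adj z z') : z' ∈ G.reachWithin T w := by
  obtain ⟨p, hp⟩ := hz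
  refine ⟨p.concat h, fun y hy => ?_⟩
  rw [Walk.support_concat, List.mem_append, List.mem_singleton] at hy
  exact hy.elim (hp y) (· ▸ hz')

theorem exists_walk_of_mem_reachWithin {a b : V} (ha : a ∈ G.reachWithin T w)
    (hb : b ∈ G.reachWithin T w) : ∃ p : G.Walk a b, ∀ y ∈ p.support, y ∈ T := by
  obtain ⟨p, hp⟩ := ha
  obtain ⟨q, hq⟩ := hb
  refine ⟨p.reverse.append q, fun y hy => ?_⟩
  rw [Walk.mem_support_append_iff, Walk.support_reverse, List.mem_reverse] at hy
  exact hy.elim (hp y) (hq y)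

theorem neighborSet_inter_subset_of_mem_reachWithin {s : Set V} {u v : V}
    (hv : v ∈ G.reachWithin (s \ insert u (G.neighborSet u)) w) :
    G.neighborSet v ∩ s ⊆
      G.reachWithin (s \ insert u (G.neighborSet u)) w ∪ G.neighborSet u := by
  rintro z ⟨hvz, hzs⟩
  obtain ⟨hvu, huv⟩ := not_or.mp (reachWithin_subset hv).2
  by_cases huz : G.Adj u z
  · exact .inr huz
  · refine .inl (mem_reachWithin_of_adj hv ⟨hzs, not_or.mpr ⟨?_, huz⟩⟩ hvz)
    rintro rfl
    exact huv hvz.symm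

theorem isClique_neighborSet_inter_of_forall_adj {s : Set V} {k v : V}
    (hk : ∀ z ∈ s, z ≠ k → G.Adj k z) (h : G.IsClique (G.neighborSet v ∩ (s \ {k}))) :
    G.IsClique (G.neighborSet v ∩ s) := by
  refine (h.insert fun z hz hkz => hk z hz.2.1 hkz.symm).subset fun z ⟨hvz, hzs⟩ => ?_
  exact (eq_or_ne z k).imp id fun hzk => ⟨hvz, hzs, hzk⟩

end SimpleGraph

open SimpleGraph

namespace IsChordal

variable {V : Type*} {G : SimpleGraph V}

/-- Closing a chordless `x`–`y` path through `u` would give a chordless cycle of length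
`≥ 4`. -/
theorem adj_of_walk (hG : IsChordal G) {u x y : V} (hx : G.Adj u x) (hy : G.Adj u y)
    (hxy : x ≠ y) (p : G.Walk x y)
    (hp : ∀ z ∈ p.support, z = x ∨ z = y ∨ z ≠ u ∧ ¬G.Adj u z) : G.Adj x y := by
  by_contra hnadj
  obtain ⟨q, hq, hqc, hqp⟩ := p.exists_isPath_isChordless
  have hu : u ∉ q.support := fun hu => by
    rcases hp u (hqp hu) with rfl | rfl | ⟨hne, -⟩
    exacts [hx.ne rfl, hy.ne rfl, hne rfl]
  have hlen : 2 ≤ q.length := by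
    by_contra! h
    interval_cases hl : q.length
    exacts [hxy (Walk.eq_of_length_eq_zero hl), hnadj (Walk.adj_of_length_eq_one hl)]
  let c : G.Walk u u := .cons hx (q.concat hy.symm)
  have hc : c.IsCycle := by
    refine (Walk.cons_isCycle_iff _ hx).mpr ⟨hq.concat hu hy.symm, fun h => ?_⟩
    rw [Walk.edges_concat, List.concat_eq_append, List.mem_append, List.mem_singleton] at h
    rcases h with h | h
    · exact hu (q.fst_mem_support_of_mem_edges h)
    · exact hxy (by simp_all)
  have hcq : ∀ z ∈ c.support, z = u ∨ z ∈ q.support := by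
    simp [c, Walk.support_concat, or_comm]
  have hedge : ∀ z ∈ q.support, G.Adj u z → s(u, z) ∈ c.edges := fun z hz huz => by
    rcases hp z (hqp hz) with rfl | rfl | ⟨-, hnz⟩
    · simp [c]
    · simp [c, Walk.edges_concat, Sym2.eq_swap]
    · exact absurd huz hnz
  obtain ⟨a, b, ha, hb, hab, hnot⟩ := hG c hc (by simp [c]; omega)
  rcases hcq a ha with rfl | haq <;> rcases hcq b hb with rfl | hbq
  · exact hab.ne rfl
  · exact hnot (hedge b hbq hab)
  · exact hnot (Sym2.eq_swap ▸ hedge a haq hab.symm)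
  · exact hnot (by simp [c, hqc.mem_edges haq hbq hab])

theorem isClique_attachments (hG : IsChordal G) {u w : V} {T : Set V}
    (hT : ∀ z ∈ T, z ≠ u ∧ ¬G.Adj u z) :
    G.IsClique {x | G.Adj u x ∧ ∃ c ∈ G.reachWithin T w, G.Adj x c} := by
  rintro x ⟨hux, c, hc, hxc⟩ y ⟨huy, d, hd, hyd⟩ hxy
  obtain ⟨p, hp⟩ := exists_walk_of_mem_reachWithin hc hd
  refine hG.adj_of_walk hux huy hxy (.cons hxc (p.concat hyd.symm)) fun z hz => ?_
  rw [Walk.support_cons, List.mem_cons, Walk.support_concat, List.mem_append,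
    List.mem_singleton] at hz
  rcases hz with rfl | hz | rfl
  exacts [.inl rfl, .inr (.inr (hT z (hp z hz))), .inr (.inl rfl)]

theorem exists_ssubset_of_not_adj (hG : IsChordal G) {s : Finset V} {u w : V} (hu : u ∈ s)
    (hw : w ∈ s) (hwu : w ≠ u) (huw : ¬G.Adj u w) :
    ∃ H ⊂ s, w ∈ H ∧ G.IsClique (↑H ∩ G.neighborSet u) ∧
      ∀ v ∈ H, ¬G.Adj u v → v ≠ u ∧ G.neighborSet v ∩ s ⊆ H := by
  classical
  set T : Set V := ↑s \ insert u (G.neighborSet u)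
  have hT : ∀ z ∈ T, z ≠ u ∧ ¬G.Adj u z := fun z hz => not_or.mp hz.2
  set C := G.reachWithin T w
  set H := s.filter fun z => z ∈ C ∨ G.Adj u z ∧ ∃ c ∈ C, G.Adj z c
  have huH : u ∉ H := fun h => (Finset.mem_filter.mp h).2.elim
    (fun hu => (hT u (reachWithin_subset hu)).1 rfl) (fun h => h.1.ne rfl)
  have hwH : w ∈ H :=
    Finset.mem_filter.mpr ⟨hw, .inl (mem_reachWithin_self ⟨hw, not_or.mpr ⟨hwu, huw⟩⟩)⟩
  have hHs : H ⊂ s :=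
    Finset.ssubset_iff_subset_ne.mpr ⟨Finset.filter_subset _ _, fun h => huH (h ▸ hu)⟩
  refine ⟨H, hHs, hwH, ?_, ?_⟩
  · refine (hG.isClique_attachments (w := w) hT).subset fun z ⟨hzH, huz⟩ => ?_
    exact (Finset.mem_filter.mp hzH).2.resolve_left fun hz => (hT z (reachWithin_subset hz)).2 huz
  · intro v hvH huv
    have hvC : v ∈ C := (Finset.mem_filter.mp hvH).2.resolve_right fun h => huv h.1
    refine ⟨(hT v (reachWithin_subset hvC)).1, ?_⟩
    rintro z ⟨hvz, hzs⟩
    refine Finset.mem_filter.mpr ⟨hzs, ?_⟩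
    exact (neighborSet_inter_subset_of_mem_reachWithin hvC ⟨hvz, hzs⟩).imp_right
      fun huz => ⟨huz, v, hvC, hvz.symm⟩

theorem exists_notMem_isClique_neighborSet_inter (hG : IsChordal G) (s : Finset V)
    {K : Set V} (hK : G.IsClique K) (hKs : K ⊆ s) (hsK : ¬(s : Set V) ⊆ K) :
    ∃ v ∈ s, v ∉ K ∧ G.IsClique (G.neighborSet v ∩ s) := by
  classical
  induction s using Finset.strongInduction generalizing K with | H s ih => ?_
  by_cases hsep :
      ∃ u ∈ s, K ⊆ insert u (G.neighborSet u) ∧ ∃ w ∈ s, w ≠ u ∧ ¬G.Adj u w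
  · obtain ⟨u, hu, hKu, w, hw, hwu, huw⟩ := hsep
    obtain ⟨H, hHs, hwH, hSH, hclosed⟩ := hG.exists_ssubset_of_not_adj hu hw hwu huw
    obtain ⟨v, hvH, hvS, hv⟩ := ih H hHs hSH Set.inter_subset_left fun h => huw (h hwH).2
    have huv : ¬G.Adj u v := fun h => hvS ⟨hvH, h⟩
    obtain ⟨hvu, hvs⟩ := hclosed v hvH huv
    refine ⟨v, hHs.subset hvH, fun hvK => (hKu hvK).elim hvu huv, hv.subset ?_⟩
    exact fun z hz => ⟨hz.1, hvs hz⟩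
  push Not at hsep
  obtain ⟨v, hv, hvK⟩ := Set.not_subset.mp hsK
  rcases K.eq_empty_or_nonempty with rfl | ⟨k, hk⟩
  · have hs : G.IsClique s := fun a ha b hb hab => hsep a ha (Set.empty_subset _) b hb hab.symm
    exact ⟨v, hv, hvK, hs.subset Set.inter_subset_right⟩
  have hk_adj : ∀ z ∈ s, z ≠ k → G.Adj k z :=
    hsep k (hKs hk) fun z hz => (eq_or_ne z k).imp id fun hzk => hK hk hz hzk.symm
  have hvk : v ≠ k := fun h => hvK (h ▸ hk)
  obtain ⟨v', hv', hv'K, hclique⟩ :=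
    ih (s.erase k) (Finset.erase_ssubset (hKs hk)) (K := K \ {k})
      (hK.subset Set.sdiff_subset)
      (by rw [Finset.coe_erase]; exact Set.sdiff_subset_sdiff_left hKs)
      fun h => hvK (h (by simp [hv, hvk])).1
  rw [Finset.mem_erase] at hv'
  rw [Finset.coe_erase] at hclique
  exact ⟨v', hv'.2, fun h => hv'K ⟨h, hv'.1⟩,
    isClique_neighborSet_inter_of_forall_adj hk_adj hclique⟩

end IsChordal

/-- every finite chordal graph with at least one vertex has a
simplicial vertex, i.e., a vertex whose neighborhood induces a clique. -/
theorem chordal_has_simplicial_vertex {V : Type*} [Fintype V] [Nonempty V]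
    (G : SimpleGraph V) (hG : IsChordal G) :
    ∃ v : V, G.IsClique (G.neighborSet v) := by
  obtain ⟨v, -, -, hv⟩ := hG.exists_notMem_isClique_neighborSet_inter Finset.univ
    (K := ∅) (by simp) (Set.empty_subset _) (by simp)
  exact ⟨v, by simpa using hv⟩
end

section
/- Let G' = (V,F) be a chordal graph with maximal cliques C₁,...,C_l (and all diagonal entries specified). Any partial symmetric matrix X̄ ∈ Sⁿ(F,?) such that the fully-specified principal submatrix X̄_{C_r C_r} is positive definite for each r = 1,...,l admits a completion to a positive definite matrix. -/
/-- A maximal clique (as a finite vertex set). -/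
def IsMaximalClique {V : Type*} (G : SimpleGraph V) (s : Finset V) : Prop :=
  G.IsClique (s : Set V) ∧
    ∀ t : Finset V, G.IsClique (t : Set V) → s ⊆ t → s = t

/-- The fully specified principal submatrix of `X` on a finite index set `s`. -/
def principalSubmatrix {n : ℕ} (X : Matrix (Fin n) (Fin n) ℝ) (s : Finset (Fin n)) :
    Matrix {i // i ∈ s} {i // i ∈ s} ℝ :=
  X.submatrix (fun i => (i : Fin n)) (fun i => (i : Fin n))

/-!
A finite chordal graph has a simplicial vertex `v`, i.e. one whose neighbourhood is a clique
(Dirac: a minimal separator of two non-adjacent vertices is a clique, and each of its sides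
contains a simplicial vertex). Deleting `v` leaves a chordal graph, so by induction on the number
of vertices the partial matrix on the remaining vertices has a positive definite completion `Y`.
As `{v} ∪ N(v)` is a clique, the specified entries of the row of `v` border `Y` restricted to
`N(v)` to a positive definite matrix. Taking as new column of `Y` the vector `Y z`, where `z` is
the zero extension of the solution of the system on `N(v)`, keeps the Schur complement of the
corner entry, hence gives a positive definite completion on all vertices.
-/

open SimpleGraph

namespace Matrix

variable {m k : Type*}

def borderMatrix (Y : Matrix m m ℝ) (y : m → ℝ) (a : ℝ) : Matrix (Option m) (Option m) ℝ
  | none, none => a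
  | none, some j => y j
  | some i, none => y i
  | some i, some j => Y i j

variable (Y : Matrix m m ℝ) (y : m → ℝ) (a : ℝ)

@[simp] lemma borderMatrix_none_none : borderMatrix Y y a none none = a := rfl
@[simp] lemma borderMatrix_none_some (j : m) : borderMatrix Y y a none (some j) = y j := rfl
@[simp] lemma borderMatrix_some_none (i : m) : borderMatrix Y y a (some i) none = y i := rfl
@[simp] lemma borderMatrix_some_some (i j : m) : borderMatrix Y y a (some i) (some j) = Y i j :=
  rfl

variable [Fintype m]

lemma dotProduct_borderMatrix_mulVec (x : Option m → ℝ) :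
    x ⬝ᵥ (borderMatrix Y y a *ᵥ x) =
      (x ∘ some) ⬝ᵥ (Y *ᵥ (x ∘ some)) + 2 * x none * (y ⬝ᵥ (x ∘ some)) + a * x none ^ 2 := by
  simp only [dotProduct, mulVec, Fintype.sum_option, borderMatrix_none_none,
    borderMatrix_none_some, borderMatrix_some_none, borderMatrix_some_some, Function.comp_apply,
    mul_add, Finset.sum_add_distrib, Finset.mul_sum]
  have h : ∑ i, 2 * x none * (y i * x (some i)) =
      ∑ i, x (some i) * (y i * x none) + ∑ i, x none * (y i * x (some i)) := by
    rw [← Finset.sum_add_distrib]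
    exact Finset.sum_congr rfl fun i _ => by ring
  rw [h]
  ring

lemma dotProduct_borderMatrix_mulVec_mulVec {Y : Matrix m m ℝ} (hY : Y.IsSymm) (z : m → ℝ)
    (x : Option m → ℝ) :
    x ⬝ᵥ (borderMatrix Y (Y *ᵥ z) a *ᵥ x) =
      (x ∘ some + x none • z) ⬝ᵥ (Y *ᵥ (x ∘ some + x none • z)) +
        (a - z ⬝ᵥ (Y *ᵥ z)) * x none ^ 2 := by
  have hsymm : z ⬝ᵥ (Y *ᵥ (x ∘ some)) = (Y *ᵥ z) ⬝ᵥ (x ∘ some) := by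
    rw [dotProduct_mulVec, ← mulVec_transpose, hY.eq]
  rw [dotProduct_borderMatrix_mulVec, mulVec_add, mulVec_smul, add_dotProduct, dotProduct_add,
    dotProduct_add, smul_dotProduct, smul_dotProduct, dotProduct_smul, dotProduct_smul, hsymm,
    dotProduct_comm (x ∘ some) (Y *ᵥ z)]
  simp only [smul_eq_mul]
  ring

lemma posDef_borderMatrix_mulVec_iff {Y : Matrix m m ℝ} (hY : Y.PosDef) (z : m → ℝ) :
    (borderMatrix Y (Y *ᵥ z) a).PosDef ↔ z ⬝ᵥ (Y *ᵥ z) < a := by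
  have hYs : Y.IsSymm := isHermitian_iff_isSymm.mp hY.isHermitian
  constructor
  · intro h
    set x : Option m → ℝ := fun i => i.elim 1 (-z)
    have hx : x ≠ 0 := fun h0 => by simpa [x] using congrFun h0 none
    have := h.dotProduct_mulVec_pos hx
    rw [star_trivial, dotProduct_borderMatrix_mulVec_mulVec _ hYs,
      show x ∘ some = -z from rfl, show x none = 1 from rfl] at this
    simpa using this
  · intro h
    refine .of_dotProduct_mulVec_pos ?_ fun x hx => ?_
    · ext (_ | i) (_ | j) <;> simp [hYs.apply]
    rw [star_trivial, dotProduct_borderMatrix_mulVec_mulVec _ hYs]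
    by_cases ht : x none = 0
    · have hxs : x ∘ some ≠ 0 := fun h0 => hx <| funext fun
        | none => ht
        | some i => congrFun h0 i
      simpa [ht] using hY.dotProduct_mulVec_pos hxs
    · have := hY.posSemidef.dotProduct_mulVec_nonneg (x ∘ some + x none • z)
      rw [star_trivial] at this
      exact add_pos_of_nonneg_of_pos this (mul_pos (sub_pos.mpr h) (by positivity))

lemma extend_zero_dotProduct [Fintype k] {g : k → m} (hg : Function.Injective g) (w : k → ℝ)
    (v : m → ℝ) :
    Function.extend g w 0 ⬝ᵥ v = w ⬝ᵥ (v ∘ g) := by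
  refine (Fintype.sum_of_injective g hg _ _ (fun i hi => ?_) fun j => ?_).symm
  · rw [Function.extend_apply' _ _ _ hi, Pi.zero_apply, zero_mul]
  · rw [hg.extend_apply, Function.comp_apply]

/-- Amalgamation of a positive definite `Y` on `m` with a positive definite `M` on `k ∪ {∗}`
that agree on `k ⊆ m`. -/
theorem PosDef.exists_posDef_option_extension [Fintype k] [DecidableEq k] {Y : Matrix m m ℝ}
    (hY : Y.PosDef) {g : k → m} (hg : Function.Injective g) {M : Matrix (Option k) (Option k) ℝ}
    (hM : M.PosDef) (hMY : M.submatrix some some = Y.submatrix g g) :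
    ∃ N : Matrix (Option m) (Option m) ℝ, N.PosDef ∧ N.submatrix some some = Y ∧
      N.submatrix (Option.map g) (Option.map g) = M := by
  set B := Y.submatrix g g
  have hB : B.PosDef := hY.submatrix hg
  set w : k → ℝ := B⁻¹ *ᵥ fun i => M (some i) none
  have hBw : B *ᵥ w = fun i => M (some i) none := by
    rw [mulVec_mulVec, mul_nonsing_inv _ ((isUnit_iff_isUnit_det B).mp hB.isUnit), one_mulVec]
  have hMB : M = borderMatrix B (B *ᵥ w) (M none none) := by
    ext (_ | i) (_ | j)
    · rfl
    · simpa [hBw] using (hM.isHermitian.apply _ _).symm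
    · simp [hBw]
    · simp [← hMY]
  set z := Function.extend g w 0
  have hYz : (Y *ᵥ z) ∘ g = B *ᵥ w := by
    ext i
    rw [Function.comp_apply, mulVec, mulVec, dotProduct_comm, extend_zero_dotProduct hg,
      dotProduct_comm]
    rfl
  have hzYz : z ⬝ᵥ (Y *ᵥ z) = w ⬝ᵥ (B *ᵥ w) := by rw [extend_zero_dotProduct hg, hYz]
  refine ⟨borderMatrix Y (Y *ᵥ z) (M none none), ?_, ?_, ?_⟩
  · rw [posDef_borderMatrix_mulVec_iff _ hY, hzYz, ← posDef_borderMatrix_mulVec_iff _ hB, ← hMB]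
    exact hM
  · ext i j; rfl
  · rw [hMB]
    ext (_ | i) (_ | j) <;> simp [← hYz, B]

end Matrix

namespace SimpleGraph

variable {V W : Type*} {G : SimpleGraph V}

namespace Walk

lemma exists_length_lt_of_adj_of_notMem_edges {x y u w : V} {p : G.Walk x y}
    (hu : u ∈ p.support) (hw : w ∈ p.support) (hadj : G.Adj u w) (he : s(u, w) ∉ p.edges) :
    ∃ q : G.Walk x y, q.length < p.length ∧ q.support ⊆ p.support := by
  wlog hlt : ∃ i j, i < j ∧ j ≤ p.length ∧ p.getVert i = u ∧ p.getVert j = w generalizing u w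
  · obtain ⟨i, rfl, hi⟩ := mem_support_iff_exists_getVert.mp hu
    obtain ⟨j, rfl, hj⟩ := mem_support_iff_exists_getVert.mp hw
    rcases lt_trichotomy i j with hij | rfl | hij
    · exact absurd ⟨i, j, hij, hj, rfl, rfl⟩ hlt
    · exact absurd rfl hadj.ne
    · exact this hw hu hadj.symm (Sym2.eq_swap ▸ he) ⟨j, i, hij, hi, rfl, rfl⟩
  obtain ⟨i, j, hij, hj, rfl, rfl⟩ := hlt
  have hj' : i + 1 ≠ j := by
    rintro rfl
    exact he ((mk_mem_edges_iff_exists p).mpr ⟨i, by omega, rfl⟩)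
  refine ⟨(p.take i).append (cons hadj (p.drop j)), ?_, ?_⟩
  · simp only [length_append, length_cons, take_length, drop_length]
    omega
  · simp only [support_append, support_cons, List.tail_cons]
    exact List.append_subset.mpr ⟨(p.isSubwalk_take i).support_subset,
      (p.isSubwalk_drop j).support_subset⟩

lemma exists_isPath_isChordless_support_subset {x y : V} (p : G.Walk x y) :
    ∃ q : G.Walk x y, q.IsPath ∧ q.IsChordless ∧ q.support ⊆ p.support := by
  classical
  have hex : ∃ n, ∃ q : G.Walk x y, q.support ⊆ p.support ∧ q.length = n :=
    ⟨_, p, List.Subset.refl _, rfl⟩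
  obtain ⟨q, hqp, hq⟩ := Nat.find_spec hex
  have hmin : ∀ r : G.Walk x y, r.support ⊆ p.support → q.length ≤ r.length := fun r hr =>
    hq ▸ Nat.find_min' hex ⟨r, hr, rfl⟩
  have hbp : q.bypass.support ⊆ p.support := List.Subset.trans q.support_bypass_subset_support hqp
  refine ⟨q.bypass, q.bypass_isPath, isChordless_iff_forall_mem_edges.mpr ?_, hbp⟩
  intro u w hu hw hadj
  by_contra he
  obtain ⟨r, hr, hrs⟩ := exists_length_lt_of_adj_of_notMem_edges hu hw hadj he
  have := hmin r (List.Subset.trans hrs hbp)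
  have := q.length_bypass_le_length
  omega

lemma two_le_length_of_not_adj {x y : V} (hxy : x ≠ y) (hnadj : ¬G.Adj x y) (p : G.Walk x y) :
    2 ≤ p.length := by
  by_contra! h
  interval_cases hp : p.length
  · exact hxy (eq_of_length_eq_zero hp)
  · exact hnadj (adj_of_length_eq_one hp)

lemma IsPath.ne_of_mem_support_tail {x y z : V} {p : G.Walk x y} (hp : p.IsPath)
    (hz : z ∈ p.support.tail) : z ≠ x := by
  rintro rfl
  have := hp.support_nodup
  rw [← p.cons_tail_support] at this
  exact (List.nodup_cons.mp this).1 hz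

lemma IsPath.isCycle_append_reverse {x y : V} {P Q : G.Walk x y} (hP : P.IsPath) (hQ : Q.IsPath)
    (hPQ : ∀ z ∈ P.support, z ∈ Q.support → z = x ∨ z = y) (hlen : 1 < P.length) :
    (P.append Q.reverse).IsCycle := by
  refine hP.isCycle_append hQ.reverse (fun z hzP hzQ => ?_) (.inl hlen)
  have hzx := hP.ne_of_mem_support_tail hzP
  have hzy := hQ.reverse.ne_of_mem_support_tail hzQ
  rw [support_reverse] at hzQ
  obtain h | h :=
    hPQ z (List.mem_of_mem_tail hzP) (List.mem_reverse.mp (List.mem_of_mem_tail hzQ))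
  exacts [hzx h, hzy h]

end Walk

def ReachableAvoiding (G : SimpleGraph V) (S : Set V) (u v : V) : Prop :=
  ∃ p : G.Walk u v, ∀ x ∈ p.support, x ∉ S

def IsSeparator (G : SimpleGraph V) (a b : V) (S : Set V) : Prop :=
  a ∉ S ∧ b ∉ S ∧ ¬G.ReachableAvoiding S a b

variable {S : Set V} {a b u v w x y : V}

namespace ReachableAvoiding

lemma refl (ha : a ∉ S) : G.ReachableAvoiding S a a :=
  ⟨.nil, by simpa using ha⟩

lemma symm (h : G.ReachableAvoiding S u v) : G.ReachableAvoiding S v u :=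
  let ⟨p, hp⟩ := h
  ⟨p.reverse, fun x hx => hp x (by simpa using hx)⟩

lemma trans (h₁ : G.ReachableAvoiding S u v) (h₂ : G.ReachableAvoiding S v w) :
    G.ReachableAvoiding S u w :=
  let ⟨p, hp⟩ := h₁
  let ⟨q, hq⟩ := h₂
  ⟨p.append q, fun x hx => (Walk.mem_support_append_iff p q).mp hx |>.elim (hp x) (hq x)⟩

lemma notMem_right (h : G.ReachableAvoiding S u v) : v ∉ S :=
  let ⟨p, hp⟩ := h
  hp v p.end_mem_support

lemma of_mem_support {p : G.Walk u v} (hp : ∀ x ∈ p.support, x ∉ S) (hw : w ∈ p.support) :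
    G.ReachableAvoiding S u w := by
  classical
  exact ⟨p.takeUntil w hw, fun x hx => hp x (p.support_takeUntil_subset_support hw hx)⟩

end ReachableAvoiding

lemma Adj.reachableAvoiding (h : G.Adj u v) (hu : u ∉ S) (hv : v ∉ S) :
    G.ReachableAvoiding S u v :=
  ⟨h.toWalk, by simp [hu, hv]⟩

lemma Walk.exists_reachableAvoiding_adj_mem (p : G.Walk a v) (ha : a ∉ S)
    (hp : ∃ w ∈ p.support, w ∈ S) :
    ∃ u w, G.ReachableAvoiding S a u ∧ G.Adj u w ∧ w ∈ S ∧ w ∈ p.support := by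
  induction p with
  | nil =>
    obtain ⟨w, hw, hwS⟩ := hp
    exact absurd ((List.mem_singleton.mp hw) ▸ hwS) ha
  | @cons a c v hac q ih =>
    by_cases hc : c ∈ S
    · exact ⟨a, c, .refl ha, hac, hc, by simp⟩
    obtain ⟨w, hw, hwS⟩ := hp
    have hwq : w ∈ q.support := (List.mem_cons.mp hw).resolve_left (by rintro rfl; exact ha hwS)
    obtain ⟨u, w', hu, huw, hwS', hw'⟩ := ih hc ⟨w, hwq, hwS⟩
    exact ⟨u, w', (hac.reachableAvoiding ha hc).trans hu, huw, hwS', by simp [hw']⟩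

namespace IsSeparator

lemma symm (hS : G.IsSeparator a b S) : G.IsSeparator b a S :=
  ⟨hS.2.1, hS.1, fun h => hS.2.2 h.symm⟩

lemma ne_of_reachableAvoiding (hS : G.IsSeparator a b S) (hu : G.ReachableAvoiding S a u)
    (hw : G.ReachableAvoiding S b w) : u ≠ w := by
  rintro rfl
  exact hS.2.2 (hu.trans hw.symm)

lemma not_adj_of_reachableAvoiding (hS : G.IsSeparator a b S) (hu : G.ReachableAvoiding S a u)
    (hw : G.ReachableAvoiding S b w) : ¬G.Adj u w := fun h =>
  hS.2.2 (hu.trans ((h.reachableAvoiding hu.notMem_right hw.notMem_right).trans hw.symm))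

end IsSeparator

lemma isSeparator_comm : G.IsSeparator a b = G.IsSeparator b a :=
  funext fun _ => propext ⟨.symm, .symm⟩

lemma isSeparator_compl_pair (hab : a ≠ b) (hnadj : ¬G.Adj a b) : G.IsSeparator a b {a, b}ᶜ := by
  refine ⟨by simp, by simp, fun ⟨p, hp⟩ => ?_⟩
  cases p with
  | nil => exact hab rfl
  | @cons _ c _ hac q =>
    refine hp c (by simp) ?_
    rintro (rfl | rfl)
    exacts [hac.ne rfl, hnadj hac]

lemma exists_minimal_isSeparator [Finite V] (hab : a ≠ b) (hnadj : ¬G.Adj a b) :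
    ∃ S, Minimal (G.IsSeparator a b) S :=
  let ⟨S, _, hS⟩ := exists_minimal_le_of_wellFoundedLT _ _ (isSeparator_compl_pair hab hnadj)
  ⟨S, hS⟩

lemma exists_reachableAvoiding_adj_of_minimal (hS : Minimal (G.IsSeparator a b) S) (hx : x ∈ S) :
    ∃ u, G.ReachableAvoiding S a u ∧ G.Adj u x := by
  have hsep : ¬G.IsSeparator a b (S \ {x}) := fun h => (hS.2 h Set.sdiff_subset hx).2 rfl
  obtain ⟨p, hp⟩ : G.ReachableAvoiding (S \ {x}) a b := by
    by_contra h
    exact hsep ⟨fun h' => hS.1.1 h'.1, fun h' => hS.1.2.1 h'.1, h⟩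
  obtain ⟨u, w, hu, huw, hwS, hwp⟩ :=
    p.exists_reachableAvoiding_adj_mem hS.1.1 (by by_contra! h; exact hS.1.2.2 ⟨p, h⟩)
  obtain rfl : w = x := by
    by_contra hwx
    exact hp w hwp ⟨hwS, hwx⟩
  exact ⟨u, hu, huw⟩

lemma exists_walk_of_minimal_isSeparator (hS : Minimal (G.IsSeparator a b) S) (hx : x ∈ S)
    (hy : y ∈ S) :
    ∃ p : G.Walk x y, ∀ z ∈ p.support, z = x ∨ z = y ∨ G.ReachableAvoiding S a z := by
  obtain ⟨u, hu, hux⟩ := exists_reachableAvoiding_adj_of_minimal hS hx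
  obtain ⟨v, hv, hvy⟩ := exists_reachableAvoiding_adj_of_minimal hS hy
  obtain ⟨q, hq⟩ := hu.symm.trans hv
  refine ⟨.cons hux.symm (q.concat hvy), fun z hz => ?_⟩
  simp only [Walk.support_cons, Walk.support_concat, List.mem_cons, List.mem_append,
    List.not_mem_nil, or_false] at hz
  rcases hz with rfl | hz | rfl
  exacts [.inl rfl, .inr (.inr (hu.trans (.of_mem_support hq hz))), .inr (.inl rfl)]

def IsSimplicial (G : SimpleGraph V) (v : V) : Prop :=
  G.IsClique (G.neighborSet v)

lemma isSimplicial_of_comap {f : W ↪ V} {v : W} (hv : (G.comap f).IsSimplicial v)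
    (hnb : G.neighborSet (f v) ⊆ Set.range f) : G.IsSimplicial (f v) := by
  intro x hx y hy hxy
  obtain ⟨x, rfl⟩ := hnb hx
  obtain ⟨y, rfl⟩ := hnb hy
  exact hv hx hy (fun h => hxy (h ▸ rfl))

end SimpleGraph

section Chordal

variable {V W : Type*} {G : SimpleGraph V}

theorem IsChordal.comap (hG : IsChordal G) (f : W ↪ V) : IsChordal (G.comap f) := by
  intro v c hc hlen
  let φ := (Embedding.comap f G).toHom
  have hφ : Function.Injective φ := f.injective
  obtain ⟨u, w, hu, hw, hadj, he⟩ := hG (c.map φ)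
    ((Walk.isCycle_map_iff_of_injective hφ).mpr hc) (by rwa [Walk.length_map])
  rw [Walk.support_map, List.mem_map] at hu hw
  obtain ⟨u, hu, rfl⟩ := hu
  obtain ⟨w, hw, rfl⟩ := hw
  refine ⟨u, w, hu, hw, hadj, fun hmem => he ?_⟩
  rw [Walk.edges_map]
  exact List.mem_map.mpr ⟨s(u, w), hmem, rfl⟩

theorem IsChordal.adj_of_isChordless (hG : IsChordal G) {x y : V} (hxy : x ≠ y)
    {P Q : G.Walk x y} (hP : P.IsPath) (hQ : Q.IsPath) (hPc : P.IsChordless) (hQc : Q.IsChordless)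
    (hPQ : ∀ u ∈ P.support, ∀ w ∈ Q.support, u ≠ x → u ≠ y → w ≠ x → w ≠ y →
      u ≠ w ∧ ¬G.Adj u w) :
    G.Adj x y := by
  -- Otherwise `P` followed by `Q` reversed is a chordless cycle of length at least `4`.
  by_contra hnadj
  have hlen := Walk.two_le_length_of_not_adj hxy hnadj
  have hcyc : (P.append Q.reverse).IsCycle := hP.isCycle_append_reverse hQ (fun z hzP hzQ => by
    by_contra! h
    exact (hPQ z hzP z hzQ h.1 h.2 h.1 h.2).1 rfl) (hlen P)
  obtain ⟨u, w, hu, hw, hadj, he⟩ :=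
    hG _ hcyc (by rw [Walk.length_append, Walk.length_reverse]; linarith [hlen P, hlen Q])
  simp only [Walk.mem_support_append_iff, Walk.support_reverse, List.mem_reverse] at hu hw
  simp only [Walk.edges_append, Walk.edges_reverse, List.mem_append, List.mem_reverse,
    not_or] at he
  have hcross : ∀ u ∈ P.support, ∀ w ∈ Q.support, G.Adj u w →
      s(u, w) ∈ P.edges ∨ s(u, w) ∈ Q.edges := by
    intro u hu w hw hadj
    by_cases hwP : w ∈ P.support
    · exact .inl (hPc.mem_edges hu hwP hadj)
    by_cases huQ : u ∈ Q.support
    · exact .inr (hQc.mem_edges huQ hw hadj)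
    refine absurd hadj (hPQ u hu w hw ?_ ?_ ?_ ?_).2 <;> rintro rfl
    exacts [huQ Q.start_mem_support, huQ Q.end_mem_support, hwP P.start_mem_support,
      hwP P.end_mem_support]
  rcases hu with hu | hu <;> rcases hw with hw | hw
  · exact he.1 (hPc.mem_edges hu hw hadj)
  · rcases hcross u hu w hw hadj with h | h
    exacts [he.1 h, he.2 h]
  · rcases hcross w hw u hu hadj.symm with h | h <;> rw [Sym2.eq_swap] at h
    exacts [he.1 h, he.2 h]
  · exact he.2 (hQc.mem_edges hu hw hadj)

theorem IsChordal.isClique_of_minimal_isSeparator (hG : IsChordal G) {a b : V} {S : Set V}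
    (hS : Minimal (G.IsSeparator a b) S) : G.IsClique S := by
  intro x hx y hy hxy
  obtain ⟨P₀, hP₀⟩ := exists_walk_of_minimal_isSeparator hS hx hy
  obtain ⟨Q₀, hQ₀⟩ := exists_walk_of_minimal_isSeparator (isSeparator_comm ▸ hS) hx hy
  obtain ⟨P, hP, hPc, hPs⟩ := P₀.exists_isPath_isChordless_support_subset
  obtain ⟨Q, hQ, hQc, hQs⟩ := Q₀.exists_isPath_isChordless_support_subset
  refine hG.adj_of_isChordless hxy hP hQ hPc hQc fun u hu w hw hux huy hwx hwy => ?_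
  have hau := ((hP₀ u (hPs hu)).resolve_left hux).resolve_left huy
  have hbw := ((hQ₀ w (hQs hw)).resolve_left hwx).resolve_left hwy
  exact ⟨hS.1.ne_of_reachableAvoiding hau hbw, hS.1.not_adj_of_reachableAvoiding hau hbw⟩

theorem IsChordal.exists_isSimplicial_notMem [Finite V] (hG : IsChordal G) {K : Set V}
    (hK : G.IsClique K) (hKV : ∃ v, v ∉ K) : ∃ v ∉ K, G.IsSimplicial v := by
  induction h : Nat.card V using Nat.strong_induction_on generalizing V with | _ n ih
  by_cases! hcomplete : ∀ u w : V, u ≠ w → G.Adj u w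
  · obtain ⟨v, hv⟩ := hKV
    exact ⟨v, hv, fun x _ y _ hxy => hcomplete x y hxy⟩
  obtain ⟨a, b, hab, hnadj⟩ := hcomplete
  obtain ⟨S, hS⟩ := exists_minimal_isSeparator hab hnadj
  have hSc := hG.isClique_of_minimal_isSeparator hS
  -- Induction applies to the side of `a` together with `S`, with `S` as the clique to avoid.
  have side : ∀ {a b}, Minimal (G.IsSeparator a b) S →
      ∃ u, G.ReachableAvoiding S a u ∧ G.IsSimplicial u := by
    intro a b hS
    let f := Function.Embedding.subtype fun z => G.ReachableAvoiding S a z ∨ z ∈ S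
    have hcard : Nat.card {z // G.ReachableAvoiding S a z ∨ z ∈ S} < n :=
      h ▸ Finite.card_subtype_lt (x := b) (by rintro (hb | hb); exacts [hS.1.2.2 hb, hS.1.2.1 hb])
    obtain ⟨v, hvS, hv⟩ := ih _ hcard (hG.comap f) (K := f ⁻¹' S)
      (fun x hx y hy hxy => hSc hx hy (f.injective.ne hxy))
      ⟨⟨a, .inl (.refl hS.1.1)⟩, hS.1.1⟩ rfl
    have hva : G.ReachableAvoiding S a v := v.2.resolve_right hvS
    refine ⟨v, hva, isSimplicial_of_comap hv fun x hx => ?_⟩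
    by_cases hxS : x ∈ S
    · exact ⟨⟨x, .inr hxS⟩, rfl⟩
    · exact ⟨⟨x, .inl (hva.trans (hx.reachableAvoiding hva.notMem_right hxS))⟩, rfl⟩
  obtain ⟨u, hu, hsu⟩ := side hS
  obtain ⟨w, hw, hsw⟩ := side (isSeparator_comm (G := G) ▸ hS)
  by_cases huK : u ∈ K
  · refine ⟨w, fun hwK => ?_, hsw⟩
    exact hS.1.not_adj_of_reachableAvoiding hu hw
      (hK huK hwK (hS.1.ne_of_reachableAvoiding hu hw))
  · exact ⟨u, huK, hsu⟩

end Chordal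

namespace Matrix

variable {V W : Type*}

def PosDefOnCliques (X : Matrix V V ℝ) (G : SimpleGraph V) : Prop :=
  ∀ s : Set V, G.IsClique s → (X.submatrix ((↑) : s → V) (↑)).PosDef

def IsCompletionOf (Y X : Matrix V V ℝ) (G : SimpleGraph V) : Prop :=
  ∀ i j, (i = j ∨ G.Adj i j) → Y i j = X i j

variable {X : Matrix V V ℝ} {G : SimpleGraph V}

namespace PosDefOnCliques

lemma posDef_submatrix (hX : X.PosDefOnCliques G) {ι : Type*} {φ : ι → V}
    (hφ : Function.Injective φ) (hcl : G.IsClique (Set.range φ)) : (X.submatrix φ φ).PosDef :=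
  (hX _ hcl).submatrix (Set.rangeFactorization_injective.mpr hφ)

lemma comap (hX : X.PosDefOnCliques G) (f : W ↪ V) :
    (X.submatrix f f).PosDefOnCliques (G.comap f) := fun s hs =>
  hX.posDef_submatrix (φ := fun i : s => f i) (f.injective.comp Subtype.val_injective) <| by
    rintro _ ⟨x, rfl⟩ _ ⟨y, rfl⟩ hxy
    exact hs x.2 y.2 fun h => hxy (congrArg f h)

lemma exists_completion_of_isSimplicial [Finite V] (hX : X.PosDefOnCliques G) {v : V}
    (hv : G.IsSimplicial v) {Y' : Matrix {u // u ≠ v} {u // u ≠ v} ℝ} (hY' : Y'.PosDef)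
    (hY'X : Y'.IsCompletionOf (X.submatrix (↑) (↑)) (G.comap (Function.Embedding.subtype _))) :
    ∃ Y : Matrix V V ℝ, Y.PosDef ∧ Y.IsCompletionOf X G := by
  have := Fintype.ofFinite V
  classical
  -- `e` sends `none` to `v`, so `e ∘ Option.map g` enumerates the clique `{v} ∪ N(v)`.
  let e := Equiv.optionSubtypeNe v
  let g : {u : {u // u ≠ v} // G.Adj v u} → {u // u ≠ v} := Subtype.val
  have hφ : Function.Injective (e ∘ Option.map g) :=
    e.injective.comp (Option.map_injective Subtype.val_injective)
  have hclique : G.IsClique (Set.range (e ∘ Option.map g)) := by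
    rintro _ ⟨_ | i, rfl⟩ _ ⟨_ | j, rfl⟩ hij
    exacts [absurd rfl hij, j.2, i.2.symm, hv i.2 j.2 hij]
  obtain ⟨N, hN, hNY, hNM⟩ := hY'.exists_posDef_option_extension Subtype.val_injective
    (hX.posDef_submatrix hφ hclique) (by
      ext i j
      refine (hY'X i j ?_).symm
      rcases eq_or_ne i j with h | h
      exacts [.inl (congrArg g h), .inr (hv i.2 j.2 fun h' => h (Subtype.ext (Subtype.ext h')))])
  have hNX : ∀ p q : Option {u : {u // u ≠ v} // G.Adj v u},
      N (p.map g) (q.map g) = X (e (p.map g)) (e (q.map g)) := fun p q =>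
    congrFun (congrFun hNM p) q
  have hnb : ∀ {a : {u // u ≠ v}}, (e none = e (some a) ∨ G.Adj (e none) (e (some a))) →
      G.Adj v a := by
    rintro a (h | h)
    exacts [absurd h.symm a.2, h]
  refine ⟨N.submatrix e.symm e.symm, hN.submatrix e.symm.injective, fun i j hij => ?_⟩
  obtain ⟨p, rfl⟩ := e.surjective i
  obtain ⟨q, rfl⟩ := e.surjective j
  simp only [submatrix_apply, Equiv.symm_apply_apply]
  rcases p with _ | a <;> rcases q with _ | b
  · exact hNX none none
  · exact hNX none (some ⟨b, hnb hij⟩)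
  · exact hNX (some ⟨a, hnb (hij.imp Eq.symm SimpleGraph.Adj.symm)⟩) none
  · exact (congrFun (congrFun hNY a) b).trans (hY'X a b (hij.imp_left Subtype.ext))

end PosDefOnCliques

end Matrix

theorem IsChordal.exists_posDef_completion {V : Type*} [Finite V] {G : SimpleGraph V}
    (hG : IsChordal G) {X : Matrix V V ℝ} (hX : X.PosDefOnCliques G) :
    ∃ Y : Matrix V V ℝ, Y.PosDef ∧ Y.IsCompletionOf X G := by
  induction h : Nat.card V using Nat.strong_induction_on generalizing V with | _ n ih
  rcases isEmpty_or_nonempty V with hV | hV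
  · have := Fintype.ofFinite V
    classical
    exact ⟨1, .one, fun i => isEmptyElim i⟩
  obtain ⟨v, -, hv⟩ := hG.exists_isSimplicial_notMem (K := ∅) (by simp)
    ⟨Classical.arbitrary V, id⟩
  let f := Function.Embedding.subtype fun u => u ≠ v
  obtain ⟨Y', hY', hY'X⟩ :=
    ih _ (h ▸ Finite.card_subtype_lt (not_not.mpr rfl)) (hG.comap f) (hX.comap f) rfl
  exact hX.exists_completion_of_isSimplicial hv hY' hY'X

lemma exists_isMaximalClique_superset {V : Type*} [Finite V] {G : SimpleGraph V} {s : Finset V}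
    (hs : G.IsClique (s : Set V)) : ∃ C, s ⊆ C ∧ IsMaximalClique G C :=
  let ⟨C, hsC, hC⟩ :=
    exists_maximal_ge_of_wellFoundedGT (fun t : Finset V => G.IsClique (t : Set V)) s hs
  ⟨C, hsC, hC.1, fun _ ht hCt => le_antisymm hCt (hC.2 ht hCt)⟩

lemma posDefOnCliques_of_isMaximalClique {n : ℕ} {G : SimpleGraph (Fin n)}
    {X : Matrix (Fin n) (Fin n) ℝ}
    (h : ∀ C : Finset (Fin n), IsMaximalClique G C → (principalSubmatrix X C).PosDef) :
    X.PosDefOnCliques G := by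
  intro s hs
  classical
  obtain ⟨C, hsC, hC⟩ := exists_isMaximalClique_superset (s := s.toFinset) (by simpa using hs)
  exact (h C hC).submatrix (e := fun i : s => ⟨i, hsC (by simp)⟩) fun i j hij =>
    Subtype.ext (congrArg Subtype.val hij :)

theorem chordal_posdef_completion_general {n : ℕ} (G : SimpleGraph (Fin n))
    (hG : IsChordal G)
    (Xbar : Matrix (Fin n) (Fin n) ℝ)
    (hcliques : ∀ C : Finset (Fin n), IsMaximalClique G C →
      (principalSubmatrix Xbar C).PosDef) :
    ∃ X : Matrix (Fin n) (Fin n) ℝ, X.PosDef ∧ X.IsSymm ∧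
      (∀ i, X i i = Xbar i i) ∧ ∀ i j, G.Adj i j → X i j = Xbar i j := by
  obtain ⟨X, hX, hXc⟩ := hG.exists_posDef_completion (posDefOnCliques_of_isMaximalClique hcliques)
  exact ⟨X, hX, Matrix.isHermitian_iff_isSymm.mp hX.isHermitian, fun i => hXc i i (.inl rfl),
    fun i j h => hXc i j (.inr h)⟩

/-- Grone et al.: let `G = (V, F)` be a chordal specified-entry
pattern (with the whole diagonal specified).  If a partial symmetric matrix
`X̄` has positive definite principal submatrix `X̄_{C C}` for every maximal
clique `C` of `G`, then `X̄` admits a positive definite completion, i.e., a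
positive definite symmetric matrix agreeing with `X̄` on the diagonal and on
all specified entries. -/
theorem chordal_posdef_completion {n : ℕ} (G : SimpleGraph (Fin n))
    (hG : IsChordal G)
    (Xbar : Matrix (Fin n) (Fin n) ℝ) (hsym : Xbar.IsSymm)
    (hcliques : ∀ C : Finset (Fin n), IsMaximalClique G C →
      (principalSubmatrix Xbar C).PosDef) :
    ∃ X : Matrix (Fin n) (Fin n) ℝ, X.PosDef ∧ X.IsSymm ∧
      (∀ i, X i i = Xbar i i) ∧ ∀ i j, G.Adj i j → X i j = Xbar i j :=
  chordal_posdef_completion_general G hG Xbar hcliques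
end
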